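/- Let X be a real or complex Banach space containing asymptotically isometric copies of ℓ₁. Then L¹([0,1]) (the space of Lebesgue-integrable scalar-valued functions on [0,1] with its usual norm) is linearly isometric to a subspace of the dual space X*; that is, there exists a linear isometric embedding of L¹([0,1]) into X*. -/

import Mathlib

open Filter Finset MeasureTheory

/-- `X` contains asymptotically isometric copies of `ℓ₁`. -/
def ContainsAICopiesOfL1 (𝕜 X : Type*) [RCLike 𝕜] [NormedAddCommGroup X]
    [NormedSpace 𝕜 X] : Prop :=
  ∃ (ε : ℕ → ℝ) (x : ℕ → X), (∀ n, 0 < ε n ∧ ε n < 1) ∧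
    Tendsto ε atTop (nhds 0) ∧
    ∀ (m : ℕ) (a : ℕ → 𝕜),
      (∑ n ∈ Finset.range m, (1 - ε n) * ‖a n‖) ≤ ‖∑ n ∈ Finset.range m, a n • x n‖ ∧
      ‖∑ n ∈ Finset.range m, a n • x n‖ ≤ ∑ n ∈ Finset.range m, ‖a n‖

/-!
Let `(x n)` be an asymptotically isometric `ℓ₁`-sequence with constants `ε n`. Since
`∑ (1 - ε n) ‖a n‖ ≤ ‖∑ a n • x n‖`, Hahn–Banach yields, for every array `c` of scalars of
modulus at most one, a functional of norm at most one with `w (x n) = (1 - ε n) * c n`.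
A *pattern* assigns values from a countable dense subset of the unit disc to the dyadic cells
of some level `m`; we enumerate all patterns so that each one recurs infinitely often and let
`w k j` take at `x n` the value that pattern `n` gives the cell `j` of level `k`. The operators
`T k f = ∑ j, (∫ over cell k j of f) • w k j` have norm at most one, and their pointwise limit
`T` along an ultrafilter finer than `atTop` satisfies `‖T f‖ ≤ ‖f‖`. Conversely, `‖f‖` is
almost `∑ i, ‖∫ over cell m i of f‖` for some level `m` (continuous functions are dense in
`L¹`); pick `n` whose pattern almost aligns with the phases of these integrals and with `ε n`
small: then `‖T k f (x n)‖` is almost `‖f‖` for every `k ≥ m`.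
-/

open Topology Metric

section Dual

variable {𝕜 X : Type*} [RCLike 𝕜] [NormedAddCommGroup X] [NormedSpace 𝕜 X]

theorem exists_dual_apply_eq_of_norm_linearCombination_le {ι : Type*} (x : ι → X) (c : ι → 𝕜)
    (hc : ∀ a : ι →₀ 𝕜,
      ‖Finsupp.linearCombination 𝕜 c a‖ ≤ ‖Finsupp.linearCombination 𝕜 x a‖) :
    ∃ w : StrongDual 𝕜 X, ‖w‖ ≤ 1 ∧ ∀ i, w (x i) = c i := by
  set L := Finsupp.linearCombination 𝕜 x
  set G := Finsupp.linearCombination 𝕜 c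
  have hker : LinearMap.ker L ≤ LinearMap.ker G := fun a ha => by
    simpa [LinearMap.mem_ker.1 ha] using hc a
  let φ : LinearMap.range L →ₗ[𝕜] 𝕜 :=
    ((LinearMap.ker L).liftQ G hker).comp L.quotKerEquivRange.symm.toLinearMap
  have hφ : ∀ a, φ ⟨L a, L.mem_range_self a⟩ = G a := fun a => by
    simp only [φ, LinearMap.comp_apply, LinearEquiv.coe_coe]
    rw [LinearMap.quotKerEquivRange_symm_apply_image]
    rfl
  have hφ_le : ∀ y, ‖φ y‖ ≤ 1 * ‖y‖ := by
    rintro ⟨_, a, rfl⟩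
    rw [hφ, one_mul]
    exact hc a
  obtain ⟨w, hw, hnorm⟩ := exists_extension_norm_eq _ (φ.mkContinuous 1 hφ_le)
  refine ⟨w, hnorm ▸ LinearMap.mkContinuous_norm_le _ zero_le_one _, fun i => ?_⟩
  have hwi := hw ⟨_, L.mem_range_self (Finsupp.single i 1)⟩
  rw [LinearMap.mkContinuous_apply, hφ] at hwi
  simpa [L, G] using hwi

theorem exists_dual_apply_eq_one_sub_mul {ε : ℕ → ℝ} (hε : ∀ n, ε n < 1) {x : ℕ → X}
    (hx : ∀ m (a : ℕ → 𝕜), ∑ n ∈ range m, (1 - ε n) * ‖a n‖ ≤ ‖∑ n ∈ range m, a n • x n‖)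
    {c : ℕ → 𝕜} (hc : ∀ n, ‖c n‖ ≤ 1) :
    ∃ w : StrongDual 𝕜 X, ‖w‖ ≤ 1 ∧ ∀ n, w (x n) = (1 - ε n : ℝ) * c n := by
  refine exists_dual_apply_eq_of_norm_linearCombination_le x _ fun a => ?_
  have hsupp := a.support.subset_range_sup_succ
  rw [Finsupp.linearCombination_apply, Finsupp.linearCombination_apply,
    Finsupp.sum_of_support_subset a hsupp _ (by simp),
    Finsupp.sum_of_support_subset a hsupp _ (by simp)]
  refine (norm_sum_le _ _).trans ((sum_le_sum fun n _ => ?_).trans (hx _ a))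
  rw [smul_eq_mul, norm_mul, norm_mul, RCLike.norm_ofReal, abs_of_pos (sub_pos.2 (hε n)),
    mul_left_comm]
  exact mul_le_mul_of_nonneg_left (mul_le_of_le_one_right (norm_nonneg _) (hc n))
    (sub_pos.2 (hε n)).le

end Dual

theorem Ultrafilter.tendsto_limUnder_of_norm_le {ι E : Type*} [NormedAddCommGroup E]
    [ProperSpace E] (U : Ultrafilter ι) {g : ι → E} {R : ℝ} (hg : ∀ i, ‖g i‖ ≤ R) :
    Tendsto g U (𝓝 (limUnder U g)) := by
  obtain ⟨a, -, ha⟩ := (isCompact_closedBall (0 : E) R).ultrafilter_le_nhds (U.map g) <| by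
    rw [Ultrafilter.coe_map, le_principal_iff]
    exact mem_map.2 (univ_mem' fun i => mem_closedBall_zero_iff.2 (hg i))
  exact tendsto_nhds_limUnder ⟨a, ha⟩

theorem exists_ultralimit_of_norm_le {ι 𝕜 E X : Type*} [RCLike 𝕜] [NormedAddCommGroup E]
    [NormedSpace 𝕜 E] [NormedAddCommGroup X] [NormedSpace 𝕜 X] (U : Ultrafilter ι)
    (T : ι → E →L[𝕜] StrongDual 𝕜 X) {C : ℝ} (hT : ∀ i, ‖T i‖ ≤ C) :
    ∃ S : E →L[𝕜] StrongDual 𝕜 X, ‖S‖ ≤ C ∧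
      ∀ f y, Tendsto (fun i => T i f y) U (𝓝 (S f y)) := by
  have hb : ∀ f y i, ‖T i f y‖ ≤ C * ‖f‖ * ‖y‖ := fun f y i =>
    ((T i f).le_opNorm y).trans <| by
      gcongr; exact ((T i).le_opNorm f).trans (by gcongr; exact hT i)
  set g : E → X → 𝕜 := fun f y => limUnder U (fun i => T i f y)
  have hg : ∀ f y, Tendsto (fun i => T i f y) U (𝓝 (g f y)) := fun f y =>
    U.tendsto_limUnder_of_norm_le (hb f y)
  have hg_eq : ∀ {f y a}, Tendsto (fun i => T i f y) U (𝓝 a) → g f y = a :=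
    tendsto_nhds_unique (hg _ _)
  let B : E →ₗ[𝕜] X →ₗ[𝕜] 𝕜 := LinearMap.mk₂ 𝕜 g
    (fun f f' y => hg_eq (by simpa using (hg f y).add (hg f' y)))
    (fun c f y => hg_eq (by simpa using (hg f y).const_mul c))
    (fun f y y' => hg_eq (by simpa using (hg f y).add (hg f y')))
    (fun c f y => hg_eq (by simpa using (hg f y).const_mul c))
  have hC : 0 ≤ C := by
    obtain ⟨i⟩ : Nonempty ι := (U : Filter ι).nonempty_of_neBot
    exact (ContinuousLinearMap.opNorm_nonneg _).trans (hT i)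
  exact ⟨B.mkContinuous₂ C fun f y => le_of_tendsto' (hg f y).norm (hb f y),
    LinearMap.mkContinuous₂_norm_le _ hC _, hg⟩

theorem exists_seq_frequently_eq (α : Type*) [Countable α] [Nonempty α] :
    ∃ e : ℕ → α, ∀ a, ∃ᶠ n in atTop, e n = a := by
  obtain ⟨s, hs⟩ := exists_surjective_nat α
  refine ⟨fun n => s n.unpair.2, fun a => frequently_atTop.2 fun N => ?_⟩
  obtain ⟨i, rfl⟩ := hs a
  exact ⟨Nat.pair N i, Nat.left_le_pair N i, by simp⟩

theorem le_of_forall_one_sub_sq_mul_sub_le {a b : ℝ}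
    (h : ∀ θ ∈ Set.Ioo (0 : ℝ) 1, (1 - θ) ^ 2 * (a - θ) ≤ b) : a ≤ b := by
  have hlim : Tendsto (fun θ : ℝ => (1 - θ) ^ 2 * (a - θ)) (𝓝[>] 0) (𝓝 a) := by
    have hcont : Continuous fun θ : ℝ => (1 - θ) ^ 2 * (a - θ) := by fun_prop
    simpa using (hcont.tendsto 0).mono_left nhdsWithin_le_nhds
  refine le_of_tendsto hlim ?_
  filter_upwards [Ioo_mem_nhdsGT one_pos] with θ hθ using h θ hθ

section Scalars

variable {𝕜 : Type*} [RCLike 𝕜]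

variable (𝕜) in
theorem exists_seq_closedBall_subset_closure_range :
    ∃ d : ℕ → 𝕜, (∀ n, ‖d n‖ ≤ 1) ∧ closedBall (0 : 𝕜) 1 ⊆ closure (Set.range d) := by
  obtain ⟨t, hts, htc, hst⟩ := (TopologicalSpace.IsSeparable.of_separableSpace
    (closedBall (0 : 𝕜) 1)).exists_countable_dense_subset
  obtain ⟨d, rfl⟩ := htc.exists_eq_range
    (closure_nonempty_iff.1 ⟨0, hst (mem_closedBall_self zero_le_one)⟩)
  exact ⟨d, fun n => mem_closedBall_zero_iff.1 (hts ⟨n, rfl⟩), hst⟩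

theorem exists_norm_le_one_mul_eq_norm (b : 𝕜) : ∃ z : 𝕜, ‖z‖ ≤ 1 ∧ b * z = ‖b‖ := by
  rcases eq_or_ne b 0 with rfl | hb
  · exact ⟨0, by simp⟩
  refine ⟨starRingEnd 𝕜 b / ‖b‖, ?_, ?_⟩
  · rw [norm_div, RCLike.norm_conj, RCLike.norm_ofReal, abs_norm,
      div_self (norm_ne_zero_iff.2 hb)]
  · rw [mul_div_assoc', RCLike.mul_conj, sq, mul_div_cancel_right₀ _ (by simpa using hb)]

theorem exists_norm_sum_mul_ge {d : ℕ → 𝕜} (hd : closedBall (0 : 𝕜) 1 ⊆ closure (Set.range d))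
    (s : Finset ℕ) (b : ℕ → 𝕜) {θ : ℝ} (hθ : 0 < θ) :
    ∃ u : ℕ → ℕ, (1 - θ) * ∑ i ∈ s, ‖b i‖ ≤ ‖∑ i ∈ s, b i * d (u i)‖ := by
  have happrox : ∀ i, ∃ n, ‖b i * d n - ‖b i‖‖ ≤ θ * ‖b i‖ := fun i => by
    obtain ⟨z, hz1, hz⟩ := exists_norm_le_one_mul_eq_norm (b i)
    obtain ⟨n, hn⟩ := mem_closure_range_iff.1 (hd (mem_closedBall_zero_iff.2 hz1)) θ hθ
    refine ⟨n, ?_⟩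
    rw [← hz, ← mul_sub, norm_mul, mul_comm, ← dist_eq_norm, dist_comm]
    exact mul_le_mul_of_nonneg_right hn.le (norm_nonneg _)
  choose u hu using happrox
  refine ⟨u, ?_⟩
  have herr : ‖∑ i ∈ s, b i * d (u i) - ∑ i ∈ s, (‖b i‖ : 𝕜)‖ ≤ θ * ∑ i ∈ s, ‖b i‖ := by
    rw [← sum_sub_distrib, mul_sum]
    exact (norm_sum_le _ _).trans (sum_le_sum fun i _ => hu i)
  have hsum : ‖∑ i ∈ s, (‖b i‖ : 𝕜)‖ = ∑ i ∈ s, ‖b i‖ := by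
    rw [← RCLike.ofReal_sum, RCLike.norm_ofReal,
      abs_of_nonneg (sum_nonneg fun i _ => norm_nonneg _)]
  have := norm_le_norm_add_norm_sub' (∑ i ∈ s, (‖b i‖ : 𝕜)) (∑ i ∈ s, b i * d (u i))
  rw [norm_sub_rev] at this
  linarith

end Scalars

theorem setIntegral_norm_sub_le_norm_setIntegral {α E : Type*} [MeasurableSpace α]
    [NormedAddCommGroup E] [NormedSpace ℝ E] [CompleteSpace E] {μ : Measure α} {s : Set α}
    (hs : MeasurableSet s) (hμs : μ s < ⊤) {h : α → E} (hh : IntegrableOn h s μ) {θ : ℝ}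
    (hθ : ∀ t ∈ s, ∀ τ ∈ s, ‖h t - h τ‖ ≤ θ) :
    ∫ t in s, ‖h t‖ ∂μ - 2 * θ * μ.real s ≤ ‖∫ t in s, h t ∂μ‖ := by
  rcases s.eq_empty_or_nonempty with rfl | ⟨τ, hτ⟩
  · simp
  have hosc : ‖∫ t in s, (h t - h τ) ∂μ‖ ≤ θ * μ.real s :=
    norm_setIntegral_le_of_norm_le_const hμs fun t ht => hθ t ht τ hτ
  have hnorm : ∫ t in s, ‖h t‖ ∂μ ≤ (‖h τ‖ + θ) * μ.real s := by
    calc ∫ t in s, ‖h t‖ ∂μ ≤ ∫ _ in s, (‖h τ‖ + θ) ∂μ :=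
          setIntegral_mono_on hh.norm (integrableOn_const hμs.ne) hs fun t ht => by
            linarith [norm_le_norm_add_norm_sub' (h t) (h τ), hθ t ht τ hτ]
      _ = (‖h τ‖ + θ) * μ.real s := by rw [setIntegral_const, smul_eq_mul, mul_comm]
  have hsplit : ∫ t in s, h t ∂μ = ∫ t in s, (h t - h τ) ∂μ + μ.real s • h τ := by
    rw [integral_sub hh (integrableOn_const hμs.ne), setIntegral_const, sub_add_cancel]
  have hcenter := norm_sub_norm_le (μ.real s • h τ) (-∫ t in s, (h t - h τ) ∂μ)
  rw [sub_neg_eq_add, add_comm, ← hsplit, norm_neg, norm_smul,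
    Real.norm_of_nonneg measureReal_nonneg] at hcenter
  linarith

local notation "𝕀" => Set.Icc (0 : ℝ) 1

/-- The cells of level `k` are indexed by `j ≤ 2 ^ k`; the last one is the null set `{1}`. -/
def dyadicCell (k j : ℕ) : Set 𝕀 := {t | ⌊(t : ℝ) * 2 ^ k⌋₊ = j}

theorem measurableSet_dyadicCell (k j : ℕ) : MeasurableSet (dyadicCell k j) :=
  (measurable_subtype_coe.mul_const _).nat_floor (measurableSet_singleton j)

open Function in
theorem pairwise_disjoint_dyadicCell (k : ℕ) : Pairwise (Disjoint on dyadicCell k) :=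
  fun _ _ hne => Set.disjoint_left.2 fun _ h h' => hne (h.symm.trans h')

theorem floor_mul_two_pow_mem_range (t : 𝕀) (k : ℕ) :
    ⌊(t : ℝ) * 2 ^ k⌋₊ ∈ range (2 ^ k + 1) := by
  rw [mem_range, Nat.lt_succ_iff]
  exact Nat.floor_le_of_le
    (by simpa using mul_le_mul_of_nonneg_right t.2.2 (by positivity : (0 : ℝ) ≤ 2 ^ k))

theorem biUnion_dyadicCell (k : ℕ) : ⋃ j ∈ range (2 ^ k + 1), dyadicCell k j = Set.univ :=
  Set.eq_univ_of_forall fun t => Set.mem_biUnion (floor_mul_two_pow_mem_range t k) rfl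

theorem floor_mul_two_pow_div {m k : ℕ} (hmk : m ≤ k) (a : ℝ) :
    ⌊a * 2 ^ k⌋₊ / 2 ^ (k - m) = ⌊a * 2 ^ m⌋₊ := by
  rw [← Nat.floor_div_natCast, Nat.cast_pow, Nat.cast_two, mul_div_assoc]
  congr 2
  rw [div_eq_iff (by positivity), ← pow_add, Nat.add_sub_cancel' hmk]

theorem dyadicCell_eq_biUnion {m k : ℕ} (hmk : m ≤ k) (i : ℕ) :
    dyadicCell m i =
      ⋃ j ∈ (range (2 ^ k + 1)).filter (· / 2 ^ (k - m) = i), dyadicCell k j := by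
  ext t
  simp only [dyadicCell, Set.mem_ofPred_eq, Set.mem_iUnion, mem_filter, exists_prop]
  rw [← floor_mul_two_pow_div hmk]
  constructor
  · rintro rfl
    exact ⟨_, ⟨floor_mul_two_pow_mem_range t k, rfl⟩, rfl⟩
  · rintro ⟨j, ⟨-, rfl⟩, rfl⟩
    rfl

theorem dist_lt_of_mem_dyadicCell {k j : ℕ} {s t : 𝕀} (hs : s ∈ dyadicCell k j)
    (ht : t ∈ dyadicCell k j) : dist s t < 1 / 2 ^ k := by
  have hfloor : ⌊(s : ℝ) * 2 ^ k⌋ = ⌊(t : ℝ) * 2 ^ k⌋ := by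
    rw [← Int.natCast_floor_eq_floor (by have := s.2.1; positivity),
      ← Int.natCast_floor_eq_floor (by have := t.2.1; positivity)]
    exact congrArg _ (hs.trans ht.symm)
  rw [Subtype.dist_eq, Real.dist_eq, lt_div_iff₀ (by positivity),
    ← abs_of_pos (by positivity : (0 : ℝ) < 2 ^ k), ← abs_mul, sub_mul]
  simpa using Int.abs_sub_lt_one_of_floor_eq_floor hfloor

section Integrals

variable {E : Type*} [NormedAddCommGroup E] [NormedSpace ℝ E] {F : 𝕀 → E}

theorem sum_setIntegral_dyadicCell (hF : Integrable F) (k : ℕ) :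
    ∑ j ∈ range (2 ^ k + 1), ∫ t in dyadicCell k j, F t = ∫ t, F t := by
  rw [← integral_biUnion_finset _ (fun j _ => measurableSet_dyadicCell k j)
    (fun j _ j' _ hne => pairwise_disjoint_dyadicCell k hne) (fun j _ => hF.integrableOn),
    biUnion_dyadicCell, setIntegral_univ]

theorem sum_setIntegral_dyadicCell_fiber (hF : Integrable F) {m k : ℕ} (hmk : m ≤ k) (i : ℕ) :
    ∑ j ∈ (range (2 ^ k + 1)).filter (· / 2 ^ (k - m) = i), ∫ t in dyadicCell k j, F t =
      ∫ t in dyadicCell m i, F t := by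
  rw [← integral_biUnion_finset _ (fun j _ => measurableSet_dyadicCell k j)
    (fun j _ j' _ hne => pairwise_disjoint_dyadicCell k hne) (fun j _ => hF.integrableOn),
    dyadicCell_eq_biUnion hmk]

theorem sum_norm_setIntegral_dyadicCell_le (hF : Integrable F) (k : ℕ) :
    ∑ j ∈ range (2 ^ k + 1), ‖∫ t in dyadicCell k j, F t‖ ≤ ∫ t, ‖F t‖ :=
  calc _ ≤ ∑ j ∈ range (2 ^ k + 1), ∫ t in dyadicCell k j, ‖F t‖ :=
        sum_le_sum fun _ _ => norm_integral_le_integral_norm _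
    _ = ∫ t, ‖F t‖ := sum_setIntegral_dyadicCell hF.norm k

theorem ContinuousMap.exists_integral_norm_sub_le_sum_norm_setIntegral_dyadicCell
    [CompleteSpace E] (h : C(𝕀, E)) {θ : ℝ} (hθ : 0 < θ) :
    ∃ m, (∫ t, ‖h t‖) - 2 * θ ≤ ∑ i ∈ range (2 ^ m + 1), ‖∫ t in dyadicCell m i, h t‖ := by
  obtain ⟨δ, hδ, hδh⟩ := Metric.uniformContinuous_iff.1
    (CompactSpace.uniformContinuous_of_continuous h.continuous) θ hθ
  obtain ⟨m, hm⟩ := exists_pow_lt_of_lt_one hδ (by norm_num : (1 / 2 : ℝ) < 1)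
  have hint : Integrable h := h.continuous.integrable_of_hasCompactSupport (.of_compactSpace _)
  have hcell : ∀ i, (∫ t in dyadicCell m i, ‖h t‖) - 2 * θ * volume.real (dyadicCell m i) ≤
      ‖∫ t in dyadicCell m i, h t‖ := fun i =>
    setIntegral_norm_sub_le_norm_setIntegral (measurableSet_dyadicCell m i) (measure_lt_top _ _)
      hint.integrableOn fun t ht τ hτ => by
        rw [← dist_eq_norm]
        exact (hδh ((dist_lt_of_mem_dyadicCell ht hτ).trans (by rwa [← one_div_pow]))).le
  have hvol : ∑ i ∈ range (2 ^ m + 1), volume.real (dyadicCell m i) = 1 := by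
    simpa using sum_setIntegral_dyadicCell (integrable_const (1 : ℝ)) m
  refine ⟨m, le_of_eq_of_le ?_ (sum_le_sum fun i _ => hcell i)⟩
  rw [sum_sub_distrib, ← mul_sum, hvol, mul_one, sum_setIntegral_dyadicCell hint.norm]

end Integrals

section L1

variable {𝕜 : Type*} [RCLike 𝕜]

theorem sum_setIntegral_dyadicCell_mul {F : 𝕀 → 𝕜} (hF : Integrable F) {m k : ℕ} (hmk : m ≤ k)
    (φ : ℕ → 𝕜) :
    ∑ j ∈ range (2 ^ k + 1), (∫ t in dyadicCell k j, F t) * φ (j / 2 ^ (k - m)) =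
      ∑ i ∈ range (2 ^ m + 1), (∫ t in dyadicCell m i, F t) * φ i := by
  have hmaps : ∀ j ∈ range (2 ^ k + 1), j / 2 ^ (k - m) ∈ range (2 ^ m + 1) := fun j hj => by
    rw [mem_range, Nat.lt_succ_iff] at hj ⊢
    calc j / 2 ^ (k - m) ≤ 2 ^ k / 2 ^ (k - m) := Nat.div_le_div_right hj
      _ = 2 ^ m := by rw [Nat.pow_div (Nat.sub_le k m) two_pos, Nat.sub_sub_self hmk]
  rw [← sum_fiberwise_of_maps_to hmaps]
  refine sum_congr rfl fun i _ => ?_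
  rw [← sum_setIntegral_dyadicCell_fiber hF hmk, sum_mul]
  exact sum_congr rfl fun j hj => by rw [(mem_filter.1 hj).2]

theorem exists_norm_sub_le_sum_norm_setIntegral_dyadicCell (f : Lp 𝕜 1 (volume : Measure 𝕀))
    {θ : ℝ} (hθ : 0 < θ) :
    ∃ m, ‖f‖ - θ ≤ ∑ i ∈ range (2 ^ m + 1), ‖∫ t in dyadicCell m i, f t‖ := by
  obtain ⟨h, hfh⟩ := (ContinuousMap.toLp_denseRange 𝕜 (volume : Measure 𝕀) 𝕜
    ENNReal.one_ne_top).exists_dist_lt f (by positivity : 0 < θ / 4)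
  obtain ⟨m, hm⟩ := h.exists_integral_norm_sub_le_sum_norm_setIntegral_dyadicCell
    (by positivity : 0 < θ / 4)
  set g := ContinuousMap.toLp (E := 𝕜) 1 (volume : Measure 𝕀) 𝕜 h
  have hgh : g =ᵐ[volume] h := ContinuousMap.coeFn_toLp _ _
  have hg : ‖g‖ = ∫ t, ‖h t‖ := by
    rw [L1.norm_eq_integral_norm]
    exact integral_congr_ae (hgh.fun_comp _)
  have hcell : ∀ i, ∫ t in dyadicCell m i, h t =
      (∫ t in dyadicCell m i, f t) + ∫ t in dyadicCell m i, (g - f : Lp 𝕜 1 volume) t := by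
    intro i
    rw [integral_congr_ae (ae_restrict_of_ae (Lp.coeFn_sub g f)),
      integral_sub' (L1.integrable_coeFn g).integrableOn (L1.integrable_coeFn f).integrableOn,
      add_sub_cancel, integral_congr_ae (ae_restrict_of_ae hgh)]
  have hdiff := sum_norm_setIntegral_dyadicCell_le (L1.integrable_coeFn (g - f)) m
  rw [← L1.norm_eq_integral_norm, ← dist_eq_norm, dist_comm] at hdiff
  have hsplit : ∑ i ∈ range (2 ^ m + 1), ‖∫ t in dyadicCell m i, h t‖ ≤
      ∑ i ∈ range (2 ^ m + 1), ‖∫ t in dyadicCell m i, f t‖ + dist f g := by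
    refine le_trans ?_ (add_le_add_right hdiff _)
    rw [← sum_add_distrib]
    exact sum_le_sum fun i _ => (hcell i).symm ▸ norm_add_le _ _
  have hfg : ‖f‖ ≤ (∫ t, ‖h t‖) + dist f g := by
    rw [← hg, dist_eq_norm]
    exact norm_le_insert' f g
  have hcont : (∫ t, ‖h t‖) - 2 * (θ / 4) ≤
      ∑ i ∈ range (2 ^ m + 1), ‖∫ t in dyadicCell m i, f t‖ + dist f g := hm.trans hsplit
  exact ⟨m, by linarith⟩

variable {X : Type*} [NormedAddCommGroup X] [NormedSpace 𝕜 X]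

noncomputable def dyadicCellIntegral (k j : ℕ) : Lp 𝕜 1 (volume : Measure 𝕀) →L[𝕜] 𝕜 :=
  L1.integralCLM' 𝕜 ∘L LpToLpRestrictCLM 𝕀 𝕜 𝕜 volume 1 (dyadicCell k j)

theorem dyadicCellIntegral_apply (k j : ℕ) (f : Lp 𝕜 1 (volume : Measure 𝕀)) :
    dyadicCellIntegral k j f = ∫ t in dyadicCell k j, f t := by
  rw [dyadicCellIntegral, ContinuousLinearMap.comp_apply, ← L1.integral_eq',
    L1.integral_eq_integral]
  exact integral_congr_ae (LpToLpRestrictCLM_coeFn 𝕜 _ f)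

noncomputable def dyadicOperator (w : ℕ → ℕ → StrongDual 𝕜 X) (k : ℕ) :
    Lp 𝕜 1 (volume : Measure 𝕀) →L[𝕜] StrongDual 𝕜 X :=
  ∑ j ∈ range (2 ^ k + 1), (dyadicCellIntegral k j).smulRight (w k j)

theorem dyadicOperator_apply (w : ℕ → ℕ → StrongDual 𝕜 X) (k : ℕ)
    (f : Lp 𝕜 1 (volume : Measure 𝕀)) :
    dyadicOperator w k f = ∑ j ∈ range (2 ^ k + 1), (∫ t in dyadicCell k j, f t) • w k j := by
  simp [dyadicOperator, dyadicCellIntegral_apply]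

theorem norm_dyadicOperator_le {w : ℕ → ℕ → StrongDual 𝕜 X} (hw : ∀ k j, ‖w k j‖ ≤ 1)
    (k : ℕ) : ‖dyadicOperator w k‖ ≤ 1 :=
  ContinuousLinearMap.opNorm_le_bound _ zero_le_one fun f =>
    calc ‖dyadicOperator w k f‖
        ≤ ∑ j ∈ range (2 ^ k + 1), ‖∫ t in dyadicCell k j, f t‖ * ‖w k j‖ := by
          rw [dyadicOperator_apply]
          exact (norm_sum_le _ _).trans_eq (sum_congr rfl fun j _ => norm_smul _ _)
      _ ≤ ∑ j ∈ range (2 ^ k + 1), ‖∫ t in dyadicCell k j, f t‖ :=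
          sum_le_sum fun j _ => mul_le_of_le_one_right (norm_nonneg _) (hw k j)
      _ ≤ 1 * ‖f‖ := by
          rw [one_mul, L1.norm_eq_integral_norm]
          exact sum_norm_setIntegral_dyadicCell_le (L1.integrable_coeFn f) k

theorem dyadicOperator_apply_apply_of_eq {w : ℕ → ℕ → StrongDual 𝕜 X} {y : X} {c : 𝕜}
    {φ : ℕ → 𝕜} {m k : ℕ} (hmk : m ≤ k) (hw : ∀ j, w k j y = c * φ (j / 2 ^ (k - m)))
    (f : Lp 𝕜 1 (volume : Measure 𝕀)) :
    dyadicOperator w k f y =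
      c * ∑ i ∈ range (2 ^ m + 1), (∫ t in dyadicCell m i, f t) * φ i := by
  rw [← sum_setIntegral_dyadicCell_mul (L1.integrable_coeFn f) hmk, mul_sum,
    dyadicOperator_apply]
  simp only [_root_.sum_apply, smul_apply, smul_eq_mul, hw]
  exact sum_congr rfl fun j _ => mul_left_comm _ _ _

/-- A pattern `(m, l)` prescribes the value `d (l.getD i 0)` on the cell `i` of level `m`, hence
on every cell `j` of a level `k ≥ m`, whose ancestor at level `m` is `j / 2 ^ (k - m)`. -/
def patternValue (d : ℕ → 𝕜) (p : ℕ × List ℕ) (k j : ℕ) : 𝕜 :=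
  d (p.2.getD (j / 2 ^ (k - p.1)) 0)

theorem exists_norm_dyadicOperator_apply_ge {x : ℕ → X} (hx : ∀ n, ‖x n‖ ≤ 1) {ε : ℕ → ℝ}
    (hε : Tendsto ε atTop (𝓝 0)) {d : ℕ → 𝕜}
    (hd : closedBall (0 : 𝕜) 1 ⊆ closure (Set.range d)) {code : ℕ → ℕ × List ℕ}
    (hcode : ∀ p, ∃ᶠ n in atTop, code n = p) {w : ℕ → ℕ → StrongDual 𝕜 X}
    (hw : ∀ k j n, w k j (x n) = (1 - ε n : ℝ) * patternValue d (code n) k j)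
    (f : Lp 𝕜 1 (volume : Measure 𝕀)) {θ : ℝ} (hθ : θ ∈ Set.Ioo (0 : ℝ) 1) :
    ∃ y : X, ‖y‖ ≤ 1 ∧ ∀ᶠ k in atTop, (1 - θ) ^ 2 * (‖f‖ - θ) ≤ ‖dyadicOperator w k f y‖ := by
  obtain ⟨m, hm⟩ := exists_norm_sub_le_sum_norm_setIntegral_dyadicCell f hθ.1
  set b : ℕ → 𝕜 := fun i => ∫ t in dyadicCell m i, f t
  obtain ⟨u, hu⟩ := exists_norm_sum_mul_ge hd (range (2 ^ m + 1)) b hθ.1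
  set l := (List.range (2 ^ m + 1)).map u
  obtain ⟨n, hn, hεn⟩ :=
    ((hcode (m, l)).and_eventually (hε.eventually (gt_mem_nhds hθ.1))).exists
  refine ⟨x n, hx n, eventually_atTop.2 ⟨m, fun k hk => ?_⟩⟩
  have hT : dyadicOperator w k f (x n) =
      (1 - ε n : ℝ) * ∑ i ∈ range (2 ^ m + 1), b i * d (u i) := by
    rw [dyadicOperator_apply_apply_of_eq hk (φ := fun i => d (l.getD i 0))
      (fun j => by rw [hw, hn]; rfl)]
    refine congrArg _ (sum_congr rfl fun i hi => ?_)
    rw [List.getD_eq_getElem _ _ (by simpa [l] using mem_range.1 hi), List.getElem_map,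
      List.getElem_range]
  rw [hT, norm_mul, RCLike.norm_ofReal]
  calc (1 - θ) ^ 2 * (‖f‖ - θ) ≤ (1 - θ) * ((1 - θ) * ∑ i ∈ range (2 ^ m + 1), ‖b i‖) := by
        rw [← mul_assoc, ← sq]
        exact mul_le_mul_of_nonneg_left hm (sq_nonneg _)
    _ ≤ (1 - θ) * ‖∑ i ∈ range (2 ^ m + 1), b i * d (u i)‖ := by
        gcongr
        linarith [hθ.2]
    _ ≤ |1 - ε n| * ‖∑ i ∈ range (2 ^ m + 1), b i * d (u i)‖ := by
        gcongr
        exact (by linarith : 1 - θ ≤ 1 - ε n).trans (le_abs_self _)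

end L1

theorem L1_embeds_in_dual_of_ai_general (𝕜 : Type*) [RCLike 𝕜]
    (X : Type*) [NormedAddCommGroup X] [NormedSpace 𝕜 X]
    (h : ContainsAICopiesOfL1 𝕜 X) :
    Nonempty
      ((Lp 𝕜 1 (volume : Measure (Set.Icc (0:ℝ) 1))) →ₗᵢ[𝕜] StrongDual 𝕜 X) := by
  obtain ⟨ε, x, hε, hε0, hx⟩ := h
  have hx1 : ∀ n, ‖x n‖ ≤ 1 := fun n => by
    simpa [Pi.single_apply, apply_ite (‖·‖)] using (hx (n + 1) (Pi.single n 1)).2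
  obtain ⟨d, hd1, hd⟩ := exists_seq_closedBall_subset_closure_range 𝕜
  obtain ⟨code, hcode⟩ := exists_seq_frequently_eq (ℕ × List ℕ)
  choose w hw1 hw using fun k j => exists_dual_apply_eq_one_sub_mul (fun n => (hε n).2)
    (fun m a => (hx m a).1) (c := fun n => patternValue d (code n) k j) fun n => hd1 _
  obtain ⟨S, hS1, hS⟩ := exists_ultralimit_of_norm_le (Ultrafilter.of atTop) (dyadicOperator w)
    (norm_dyadicOperator_le hw1)
  refine ⟨⟨S.toLinearMap, fun f => le_antisymm (by simpa using S.le_of_opNorm_le hS1 f) ?_⟩⟩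
  refine le_of_forall_one_sub_sq_mul_sub_le fun θ hθ => ?_
  obtain ⟨y, hy1, hy⟩ := exists_norm_dyadicOperator_apply_ge hx1 hε0 hd hcode hw f hθ
  calc (1 - θ) ^ 2 * (‖f‖ - θ) ≤ ‖S f y‖ := ge_of_tendsto (hS f y).norm (Ultrafilter.of_le _ hy)
    _ ≤ ‖S f‖ := by simpa using (S f).le_opNorm_of_le hy1

/-- If `X` contains asymptotically isometric copies of `ℓ₁`, then `L¹[0,1]` embeds
linearly isometrically into `X*`. -/
theorem L1_embeds_in_dual_of_ai (𝕜 : Type*) [RCLike 𝕜]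
    (X : Type*) [NormedAddCommGroup X] [NormedSpace 𝕜 X] [CompleteSpace X]
    (h : ContainsAICopiesOfL1 𝕜 X) :
    Nonempty
      ((Lp 𝕜 1 (volume : Measure (Set.Icc (0:ℝ) 1))) →ₗᵢ[𝕜] StrongDual 𝕜 X) :=
  L1_embeds_in_dual_of_ai_general 𝕜 X h
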